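/- Fix real numbers m ≠ 0 and ℏ > 0, and let ψ : ℝ³ × ℝ → ℂ be smooth. Let B be the symmetric ℂ-bilinear form on ℂ³ × ℂ × ℂ defined by B( (a,b,c), (a',b',c') ) = Σ_{k=1}^{3} a_k a'_k + b·c' + c·b'. Define the wave-gradient ∇ψ(y,t) = ( ∂ψ/∂y_1(y,t), ∂ψ/∂y_2(y,t), ∂ψ/∂y_3(y,t), (i·m/ℏ)·ψ(y,t), ∂ψ/∂t(y,t) ) ∈ ℂ³ × ℂ × ℂ. Then: (i) for every (y,t), ∇ψ(y,t) is the unique V ∈ ℂ³ × ℂ × ℂ such that B( V, (u,s,q) ) = Σ_{k=1}^{3} ∂ψ/∂y_k(y,t)·u_k + ∂ψ/∂t(y,t)·s + (i·m/ℏ)·ψ(y,t)·q for all (u,s,q) ∈ ℂ³ × ℂ × ℂ; and (ii) the wave-divergence of ∇ψ, namely Σ_{k=1}^{3} ∂²ψ/∂y_k²(y,t) + ∂/∂t( (i·m/ℏ)ψ )(y,t) + (i·m/ℏ)·∂ψ/∂t(y,t), equals (2m/ℏ²)·(S⁰_m ψ)(y,t) for all (y,t). Hence the free Schrödinger operator coincides,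 up to the factor ℏ²/(2m), with the Laplace–Beltrami operator of the Schrödinger metric: S⁰_m ψ = (ℏ²/(2m))·div(∇ψ). -/

import Mathlib

open scoped BigOperators

/-- Partial derivative of `ψ : ℝ³ × ℝ → ℂ` in the spatial direction `y_k`. -/
noncomputable def pdy (ψ : (Fin 3 → ℝ) × ℝ → ℂ) (k : Fin 3) (p : (Fin 3 → ℝ) × ℝ) : ℂ :=
  deriv (fun s : ℝ => ψ (Function.update p.1 k s, p.2)) (p.1 k)

/-- Partial derivative of `ψ : ℝ³ × ℝ → ℂ` in the time direction `t`. -/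
noncomputable def pdt (ψ : (Fin 3 → ℝ) × ℝ → ℂ) (p : (Fin 3 → ℝ) × ℝ) : ℂ :=
  deriv (fun s : ℝ => ψ (p.1, s)) p.2

/-- The free Schrödinger operator
`S⁰_m ψ = (ℏ²/(2m)) Σ_k ∂²ψ/∂y_k² + iℏ ∂ψ/∂t`. -/
noncomputable def freeSchrodingerOp (m hbar : ℝ) (ψ : (Fin 3 → ℝ) × ℝ → ℂ)
    (p : (Fin 3 → ℝ) × ℝ) : ℂ :=
  (hbar ^ 2 / (2 * m)) * ∑ k : Fin 3, pdy (pdy ψ k) k p + Complex.I * hbar * pdt ψ p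

/-- The complexified contravariant Schrödinger metric
`B((a,b,c),(a',b',c')) = Σ_k a_k a'_k + b·c' + c·b'` on `ℂ³ × ℂ × ℂ`. -/
noncomputable def Bform (a b : (Fin 3 → ℂ) × ℂ × ℂ) : ℂ :=
  (∑ k : Fin 3, a.1 k * b.1 k) + a.2.1 * b.2.2 + a.2.2 * b.2.1

/-- The wave-gradient
`∇ψ = (∂ψ/∂y₁, ∂ψ/∂y₂, ∂ψ/∂y₃, (i·m/ℏ)·ψ, ∂ψ/∂t)`. -/
noncomputable def waveGrad (m hbar : ℝ) (ψ : (Fin 3 → ℝ) × ℝ → ℂ)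
    (p : (Fin 3 → ℝ) × ℝ) : (Fin 3 → ℂ) × ℂ × ℂ :=
  (fun k => pdy ψ k p, Complex.I * m / hbar * ψ p, pdt ψ p)

/-- The wave-divergence of the wave-gradient:
`div(∇ψ) = Σ_k ∂²ψ/∂y_k² + ∂/∂t((i·m/ℏ)ψ) + (i·m/ℏ)·∂ψ/∂t`. -/
noncomputable def waveDivGrad (m hbar : ℝ) (ψ : (Fin 3 → ℝ) × ℝ → ℂ)
    (p : (Fin 3 → ℝ) × ℝ) : ℂ :=
  (∑ k : Fin 3, pdy (pdy ψ k) k p)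
    + pdt (fun q => Complex.I * m / hbar * ψ q) p
    + Complex.I * m / hbar * pdt ψ p

/-- (i) `∇ψ(y,t)` is the unique vector `V` with
`B(V,(u,s,q)) = Σ_k ∂ψ/∂y_k·u_k + ∂ψ/∂t·s + (i·m/ℏ)ψ·q`; (ii) the wave-divergence of
`∇ψ` equals `(2m/ℏ²)·S⁰_m ψ`; hence `S⁰_m ψ = (ℏ²/(2m))·div(∇ψ)`: the free Schrödinger
operator is, up to the factor `ℏ²/(2m)`, the Laplace–Beltrami operator of the
Schrödinger metric. -/
theorem schrodinger_is_laplace_beltrami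
    (m hbar : ℝ) (hm : m ≠ 0) (hh : 0 < hbar)
    (ψ : (Fin 3 → ℝ) × ℝ → ℂ) (hψ : ContDiff ℝ (⊤ : ℕ∞) ψ) :
    ∀ p : (Fin 3 → ℝ) × ℝ,
      (∀ V : (Fin 3 → ℂ) × ℂ × ℂ,
        (∀ (u : Fin 3 → ℂ) (s q : ℂ),
          Bform V (u, s, q)
            = (∑ k : Fin 3, pdy ψ k p * u k) + pdt ψ p * s
              + Complex.I * m / hbar * ψ p * q)
        ↔ V = waveGrad m hbar ψ p)
      ∧ waveDivGrad m hbar ψ p = (2 * m / hbar ^ 2 : ℝ) * freeSchrodingerOp m hbar ψ p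
      ∧ freeSchrodingerOp m hbar ψ p = (hbar ^ 2 / (2 * m) : ℝ) * waveDivGrad m hbar ψ p := by
  intro p
  have hdiff : Differentiable ℝ ψ := hψ.differentiable (by simp)
  have hdt : DifferentiableAt ℝ (fun s : ℝ => ψ (p.1, s)) p.2 :=
    (hdiff _).comp _ ((Differentiable.prodMk (differentiable_const _) differentiable_id) p.2)
  have hpdtc : pdt (fun q => Complex.I * m / hbar * ψ q) p
      = Complex.I * m / hbar * pdt ψ p := by
    unfold pdt
    exact deriv_const_mul _ hdt
  have hh' : (hbar : ℂ) ≠ 0 := by exact_mod_cast hh.ne'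
  have hm' : (m : ℂ) ≠ 0 := by exact_mod_cast hm
  refine ⟨fun V => ⟨fun h => ?_, fun h u s q => ?_⟩, ?_, ?_⟩
  · have h1 : ∀ j : Fin 3, V.1 j = pdy ψ j p := by
      intro j
      have := h (Pi.single j 1) 0 0
      simpa [Bform, Pi.single_apply, mul_ite, Finset.sum_ite_eq'] using this
    have h2 : V.2.2 = pdt ψ p := by
      have := h 0 1 0
      simpa [Bform] using this
    have h3 : V.2.1 = Complex.I * m / hbar * ψ p := by
      have := h 0 0 1
      simpa [Bform] using this
    refine Prod.ext (funext h1) (Prod.ext h3 h2)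
  · subst h
    simp only [Bform, waveGrad]
    ring
  · rw [waveDivGrad, freeSchrodingerOp, hpdtc]
    push_cast
    field_simp
    ring
  · rw [waveDivGrad, freeSchrodingerOp, hpdtc]
    push_cast
    field_simp
    ring
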